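/- Assume (H0) and d₁, d₂, l > 0, let k be a natural number and let ω > 0 satisfy the quartic equation ω⁴ + (A_k² − 2·B_k − b₁₁²)·ω² + B_k² − C_k² = 0. Then Ĉ_k(ω)² + S_k(ω)² = 1. -/

import Mathlib

open Real

/-- Δ = M² − 4·K·(a·m + c·p)·(a·r₂ + c·d − c·r₀) with M = a·m + c·p + K·(a·r₂ + c·d). -/
noncomputable def Delta (r₀ r₂ K d a p c m : ℝ) : ℝ :=
  (a*m + c*p + K*(a*r₂ + c*d))^2 - 4*K*(a*m + c*p)*(a*r₂ + c*d - c*r₀)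

/-- The positive equilibrium predator density v⋆. -/
noncomputable def vstar (r₀ r₂ K d a p c m : ℝ) : ℝ :=
  (-(a*m + c*p + K*(a*r₂ + c*d)) + Real.sqrt (Delta r₀ r₂ K d a p c m)) / (2*K*(a*m + c*p))

/-- The positive equilibrium prey density u⋆ = (r₂ + m·v⋆)/c. -/
noncomputable def ustar (r₀ r₂ K d a p c m : ℝ) : ℝ := (r₂ + m * vstar r₀ r₂ K d a p c m) / c

/-- Linearization coefficient a₁₂. -/
noncomputable def a12 (r₀ r₂ K d a p c m : ℝ) : ℝ :=
  -K*r₀*ustar r₀ r₂ K d a p c m / (1 + K*vstar r₀ r₂ K d a p c m)^2 - p*ustar r₀ r₂ K d a p c m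

/-- Linearization coefficient a₂₁. -/
noncomputable def a21 (r₀ r₂ K d a p c m : ℝ) : ℝ := c * vstar r₀ r₂ K d a p c m

/-- Linearization coefficient a₂₂. -/
noncomputable def a22 (r₀ r₂ K d a p c m : ℝ) : ℝ := -m * vstar r₀ r₂ K d a p c m

/-- Linearization coefficient b₁₁. -/
noncomputable def b11 (r₀ r₂ K d a p c m : ℝ) : ℝ := -a * ustar r₀ r₂ K d a p c m

/-- A_k = (d₁ + d₂)·k²/l² − a₂₂. -/
noncomputable def Ak (r₀ r₂ K d a p c m d₁ d₂ l : ℝ) (k : ℕ) : ℝ :=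
  (d₁ + d₂)*(k:ℝ)^2/l^2 - a22 r₀ r₂ K d a p c m

/-- B_k = d₁·d₂·k⁴/l⁴ − a₂₂·d₁·k²/l² − a₁₂·a₂₁. -/
noncomputable def Bk (r₀ r₂ K d a p c m d₁ d₂ l : ℝ) (k : ℕ) : ℝ :=
  d₁*d₂*(k:ℝ)^4/l^4 - a22 r₀ r₂ K d a p c m * d₁*(k:ℝ)^2/l^2 - a12 r₀ r₂ K d a p c m * a21 r₀ r₂ K d a p c m

/-- C_k = −b₁₁·d₂·k²/l² + a₂₂·b₁₁. -/
noncomputable def Ck (r₀ r₂ K d a p c m d₁ d₂ l : ℝ) (k : ℕ) : ℝ :=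
  -(b11 r₀ r₂ K d a p c m)*d₂*(k:ℝ)^2/l^2 + a22 r₀ r₂ K d a p c m * b11 r₀ r₂ K d a p c m

/-- Ĉ_k(ω) = (d₁·b₁₁·ω²·k²/l² − B_k·C_k)/(b₁₁²·ω² + C_k²). -/
noncomputable def Chat (r₀ r₂ K d a p c m d₁ d₂ l : ℝ) (k : ℕ) (ω : ℝ) : ℝ :=
  (d₁ * b11 r₀ r₂ K d a p c m * ω^2 * (k:ℝ)^2/l^2 - Bk r₀ r₂ K d a p c m d₁ d₂ l k * Ck r₀ r₂ K d a p c m d₁ d₂ l k) /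
    ((b11 r₀ r₂ K d a p c m)^2*ω^2 + (Ck r₀ r₂ K d a p c m d₁ d₂ l k)^2)

/-- S_k(ω) = (A_k·C_k·ω + B_k·b₁₁·ω − b₁₁·ω³)/(b₁₁²·ω² + C_k²). -/
noncomputable def Sk (r₀ r₂ K d a p c m d₁ d₂ l : ℝ) (k : ℕ) (ω : ℝ) : ℝ :=
  (Ak r₀ r₂ K d a p c m d₁ d₂ l k * Ck r₀ r₂ K d a p c m d₁ d₂ l k * ω + Bk r₀ r₂ K d a p c m d₁ d₂ l k * b11 r₀ r₂ K d a p c m * ω - b11 r₀ r₂ K d a p c m * ω^3) /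
    ((b11 r₀ r₂ K d a p c m)^2*ω^2 + (Ck r₀ r₂ K d a p c m d₁ d₂ l k)^2)

-- vstar is positive under (H0)
lemma vstar_pos (r₀ r₂ K d a p c m : ℝ) (hK : 0 < K) (ha : 0 < a) (hp : 0 < p)
    (hc : 0 < c) (hm : 0 < m) (hH0 : a*r₂ + c*d - c*r₀ < 0) :
    0 < vstar r₀ r₂ K d a p c m := by
  have hpos : 0 < a*m + c*p := by positivity
  set M := a*m + c*p + K*(a*r₂ + c*d) with hM
  have hΔ : M^2 < Delta r₀ r₂ K d a p c m := by
    have : 0 < -(4*K*(a*m + c*p)*(a*r₂ + c*d - c*r₀)) := by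
      have : 0 < 4*K*(a*m+c*p) := by positivity
      nlinarith
    simp only [Delta, ← hM]
    nlinarith
  have hsq : M < Real.sqrt (Delta r₀ r₂ K d a p c m) := by
    have h1 : |M| < Real.sqrt (Delta r₀ r₂ K d a p c m) := by
      have := Real.sqrt_lt_sqrt (by positivity) hΔ
      rwa [Real.sqrt_sq_eq_abs] at this
    exact lt_of_le_of_lt (le_abs_self M) h1
  have hnum : 0 < -M + Real.sqrt (Delta r₀ r₂ K d a p c m) := by linarith
  have hden : 0 < 2*K*(a*m + c*p) := by positivity
  exact div_pos hnum hden

theorem stmt9 (r₀ r₂ K d a p c m d₁ d₂ l : ℝ) (hr₀ : 0 < r₀) (hr₂ : 0 < r₂) (hK : 0 < K) (hd : 0 < d) (ha : 0 < a) (hp : 0 < p) (hc : 0 < c) (hm : 0 < m)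
    (hd₁ : 0 < d₁) (hd₂ : 0 < d₂) (hl : 0 < l)
    (hH0 : a*r₂ + c*d - c*r₀ < 0) (k : ℕ) (ω : ℝ) (hω : 0 < ω)
    (hq : ω^4 + ((Ak r₀ r₂ K d a p c m d₁ d₂ l k)^2 - 2*Bk r₀ r₂ K d a p c m d₁ d₂ l k - (b11 r₀ r₂ K d a p c m)^2)*ω^2
      + (Bk r₀ r₂ K d a p c m d₁ d₂ l k)^2 - (Ck r₀ r₂ K d a p c m d₁ d₂ l k)^2 = 0) :
    (Chat r₀ r₂ K d a p c m d₁ d₂ l k ω)^2 + (Sk r₀ r₂ K d a p c m d₁ d₂ l k ω)^2 = 1 := by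
  have hv : 0 < vstar r₀ r₂ K d a p c m := vstar_pos r₀ r₂ K d a p c m hK ha hp hc hm hH0
  have hu : 0 < ustar r₀ r₂ K d a p c m := by
    unfold ustar; positivity
  have hb : b11 r₀ r₂ K d a p c m < 0 := by
    unfold b11; nlinarith
  have hbne : b11 r₀ r₂ K d a p c m ≠ 0 := ne_of_lt hb
  set X := b11 r₀ r₂ K d a p c m with hX
  set A := Ak r₀ r₂ K d a p c m d₁ d₂ l k with hA
  set B := Bk r₀ r₂ K d a p c m d₁ d₂ l k with hB
  set C := Ck r₀ r₂ K d a p c m d₁ d₂ l k with hC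
  have hD : 0 < X^2*ω^2 + C^2 := by positivity
  have hkey : d₁ * X * ω^2 * (k:ℝ)^2/l^2 = (A*X + C)*ω^2 := by
    rw [hA, hC, Ak, Ck, ← hX]
    have hl2 : (l:ℝ)^2 ≠ 0 := by positivity
    field_simp
    ring
  rw [Chat, Sk, ← hX, ← hA, ← hB, ← hC, hkey, div_pow, div_pow, ← add_div,
    div_eq_one_iff_eq (by positivity)]
  linear_combination (X^2*ω^2 + C^2) * hq
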